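/- arXiv:1910.01353 — 6 statements merged into one kernel-verified Lean document; each statement's English description precedes it below -/
import Mathlib

section
/- Every point (y, z) of M(W, ℓ, 0) satisfies the mixing inequality y_j + Σ_{s∈[τ]} (w_{j_s,j} − w_{j_{s+1},j}) z_{j_s} ≥ w_{j_1,j} for every j-mixing-sequence {j_1 → ⋯ → j_τ} (i.e. indices with w_{j_1,j} ≥ ⋯ ≥ w_{j_τ,j} ≥ ℓ_j, with the convention w_{j_{τ+1},j} = ℓ_j); that is, these mixing inequalities are valid for M(W, ℓ, 0). -/
/-- Membership in the joint mixing set with lower bounds `M(W, ℓ, ε)`. -/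
def memM {n k : ℕ} (w : Fin n → Fin k → ℝ) (l : Fin k → ℝ) (ε : ℝ)
    (y : Fin k → ℝ) (z : Fin n → ℝ) : Prop :=
  (∀ i, z i = 0 ∨ z i = 1) ∧
  (∀ i j, y j + w i j * z i ≥ w i j) ∧
  (∀ j, y j ≥ l j) ∧
  (∑ j, y j ≥ ε + ∑ j, l j)

/-- Validity of the mixing inequalities for `M(W, ℓ, 0)`: for any
`j`-mixing-sequence `j_1 → ⋯ → j_τ` (indices with
`w_{j_1,j} ≥ ⋯ ≥ w_{j_τ,j} ≥ ℓ_j`, convention `w_{j_{τ+1},j} = ℓ_j`),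
every point of `M(W,ℓ,0)` satisfies
`y_j + Σ_s (w_{j_s,j} − w_{j_{s+1},j}) z_{j_s} ≥ w_{j_1,j}`. -/
theorem stmt_4 (n k : ℕ) (w : Fin n → Fin k → ℝ) (ℓ : Fin k → ℝ)
    (hw : ∀ i j, 0 ≤ w i j) (hℓ : ∀ j, 0 ≤ ℓ j)
    (y : Fin k → ℝ) (z : Fin n → ℝ)
    (hmem : memM w ℓ 0 y z)
    (j : Fin k) (τ : ℕ) (js : Fin (τ + 1) → Fin n)
    (hdec : ∀ s t : Fin (τ + 1), s ≤ t → w (js t) j ≤ w (js s) j)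
    (hlast : ℓ j ≤ w (js (Fin.last τ)) j) :
    y j + ∑ s : Fin (τ + 1),
        (w (js s) j - (if h : (s : ℕ) + 1 < τ + 1 then w (js ⟨(s : ℕ) + 1, h⟩) j else ℓ j))
          * z (js s)
      ≥ w (js 0) j := by
  obtain ⟨hz01, hcon, hlb, -⟩ := hmem
  induction τ with
  | zero =>
    rw [Fin.sum_univ_succ, Finset.univ_eq_empty, Finset.sum_empty, dif_neg (by omega), add_zero]
    rcases hz01 (js 0) with h | h <;> rw [h]
    · have := hcon (js 0) j; rw [h] at this; linarith
    · have := hlb j; linarith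
  | succ τ IH =>
    rcases hz01 (js 0) with h0 | h0
    · -- z (js 0) = 0, so y j ≥ w (js 0) j and sum is nonneg
      have hy : y j ≥ w (js 0) j := by
        have := hcon (js 0) j; rw [h0] at this; linarith
      have hnn : (0:ℝ) ≤ ∑ s : Fin (τ + 2),
          (w (js s) j - (if h : (s : ℕ) + 1 < τ + 2 then w (js ⟨(s : ℕ) + 1, h⟩) j else ℓ j))
            * z (js s) := by
        apply Finset.sum_nonneg
        intro s _
        apply mul_nonneg
        · split_ifs with h
          · have := hdec s ⟨(s:ℕ)+1, h⟩ (by simp [Fin.le_def])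
            linarith
          · have hs : s = Fin.last (τ+1) := by
              apply Fin.ext
              simp only [Fin.val_last]
              omega
            rw [hs]; linarith
        · rcases hz01 (js s) with h | h <;> rw [h] <;> norm_num
      linarith
    · -- z (js 0) = 1
      have IH' := IH (fun s => js s.succ)
        (fun s t hst => hdec s.succ t.succ (Fin.succ_le_succ_iff.mpr hst))
        (by simpa [Fin.succ_last] using hlast)
      rw [Fin.sum_univ_succ]
      have heq : ∀ i : Fin (τ + 1),
          (w (js i.succ) j -
            (if h : (i.succ : ℕ) + 1 < τ + 2 then w (js ⟨(i.succ : ℕ) + 1, h⟩) j else ℓ j))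
            * z (js i.succ)
          = (w (js i.succ) j -
            (if h : (i : ℕ) + 1 < τ + 1 then w (js (⟨(i : ℕ) + 1, h⟩ : Fin (τ+1)).succ) j else ℓ j))
            * z (js i.succ) := by
        intro i
        congr 1
        congr 1
        rcases Nat.lt_or_ge ((i:ℕ)+1) (τ+1) with h | h
        · rw [dif_pos (by simpa [Fin.val_succ] using Nat.succ_lt_succ h), dif_pos h]
          congr 1
        · rw [dif_neg (by simp [Fin.val_succ]; omega), dif_neg (by omega)]
      simp only [heq]
      have h1 : ((0 : Fin (τ+2)) : ℕ) + 1 < τ + 2 := by simp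
      rw [dif_pos h1, h0]
      have hfirst : js (⟨((0 : Fin (τ+2)) : ℕ) + 1, h1⟩ : Fin (τ+2)) = js (Fin.succ 0) := by
        congr 1
      have h01 : w (js (Fin.succ 0)) j ≤ w (js 0) j :=
        hdec 0 (Fin.succ 0) (by simp [Fin.le_def])
      simp only [hfirst]
      have := IH'
      simp only [Fin.succ_zero_eq_one] at this ⊢
      -- this : y j + ∑ ... ≥ w (js 1) j  (with js ∘ succ at index 0 = js 1)
      linarith [IH']
end

section
/- The aggregated mixing inequalities are valid for M(W, 0, ε): every (y,z) ∈ ℝ^k × {0,1}^n satisfying y_j + w_{i,j} z_i ≥ w_{i,j} for all i∈[n], j∈[k], y ≥ 0, and Σ_{j∈[k]} y_j ≥ ε also satisfies, for every sequence Θ = {i_1→⋯→i_θ} in [n], the inequality Σ_{j∈[k]} (y_j + Σ_{s∈[τ_j]} (w_{j_s,j} − w_{j_{s+1},j}) z_{j_s}) − min{ε, L_{W,Θ}} z_{i_θ} ≥ Σ_{j∈[k]} max{w_{i,j} : i ∈ Θ}. -/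
/-!
Fix a coordinate `j`. The coefficients `(w_{i_t,j} − max_{s>t} w_{i_s,j})_+` telescope: their sum
over `t ≥ t₀` is the maximum of `w_{·,j}` over the positions `≥ t₀` of `Θ`. If `z = 1` along all of
`Θ`, the left-hand side is therefore `Σ_j y_j + Σ_j max_Θ w_{·,j} − min{ε, L}`, and `Σ_j y_j ≥ ε`.
Otherwise let `p` be the last position with `z_{i_p} = 0`. A downward induction over the positions
up to `p` gives `y_j + Σ_t coeff · z ≥ max_Θ w_{·,j} + min{w_{i_p,j}, max_{s>p} w_{i_s,j}}`; summed
over `j`, the surplus is at least `L_{W,Θ}` when `p` is not the last position (and then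
`z_{i_θ} = 1`), and is nonnegative when it is (and then `z_{i_θ} = 0`).
-/

/-- `max{w_{i} : position t precedes i in Θ}`, with the convention that the
max over the empty set is `0`. -/
def laterMax {n θ : ℕ} (wj : Fin n → ℝ) (Θ : Fin (θ + 1) → Fin n) (t : Fin (θ + 1)) : ℝ :=
  (Finset.univ.filter (fun s => t < s)).fold max 0 (fun s => wj (Θ s))

/-- `L_{W,Θ} = min{ min_{t<θ} Σ_j min{w_{i_t,j}, max{w_{i,j} : i_t precedes i in Θ}},
Σ_j w_{i_θ,j} }`. -/
def LWT {n k θ : ℕ} (w : Fin n → Fin k → ℝ) (Θ : Fin (θ + 1) → Fin n) : ℝ :=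
  Finset.univ.inf' Finset.univ_nonempty (fun t : Fin (θ + 1) =>
    if (t : ℕ) < θ then ∑ j, min (w (Θ t) j) (laterMax (fun i => w i j) Θ t)
    else ∑ j, w (Θ t) j)

/-- `max{w_{i,j} : i ∈ Θ}`. -/
def thetaMax {n θ : ℕ} (wj : Fin n → ℝ) (Θ : Fin (θ + 1) → Fin n) : ℝ :=
  Finset.univ.fold max 0 (fun t => wj (Θ t))

/-- The left-hand side of the aggregated mixing inequality derived from `Θ`, written
(equivalently, via the identity `(coeff-transf)`) with coefficient
`(w_{i_t,j} − max{w_{i,j} : i_t precedes i in Θ})_+` on `z_{i_t}`: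
`Σ_j (y_j + Σ_{s∈[τ_j]} (w_{j_s,j} − w_{j_{s+1},j}) z_{j_s}) − min{ε, L_{W,Θ}} z_{i_θ}`. -/
def aggLHS {n k θ : ℕ} (w : Fin n → Fin k → ℝ) (ε : ℝ) (Θ : Fin (θ + 1) → Fin n)
    (y : Fin k → ℝ) (z : Fin n → ℝ) : ℝ :=
  (∑ j, (y j + ∑ t : Fin (θ + 1),
      max (w (Θ t) j - laterMax (fun i => w i j) Θ t) 0 * z (Θ t)))
    - min ε (LWT w Θ) * z (Θ (Fin.last θ))

open Finset Fin.NatCast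

lemma exists_last_zero {ζ : ℕ → ℝ} {N : ℕ} (hζ : ∀ t, ζ t = 0 ∨ ζ t = 1)
    (h : ¬∀ t < N, ζ t = 1) : ∃ p < N, ζ p = 0 ∧ ∀ t, p < t → t < N → ζ t = 1 := by
  classical
  push Not at h
  obtain ⟨t, ht, hζt⟩ := h
  have hpN : Nat.findGreatest (ζ · = 0) (N - 1) < N :=
    (Nat.findGreatest_le (N - 1)).trans_lt (by omega)
  exact ⟨_, hpN, Nat.findGreatest_spec (P := (ζ · = 0)) (by omega) ((hζ t).resolve_right hζt),
    fun s hs hsN => (hζ s).resolve_left (Nat.findGreatest_is_greatest hs (by omega))⟩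

section SuffixMax

variable (f : ℕ → ℝ) (n : ℕ)

def suffixMax (t : ℕ) : ℝ := (Ico t n).fold max 0 f

-- The coefficient `(w_{i_t,j} − max{w_{i,j} : i_t precedes i in Θ})_+` of `z_{i_t}` in `aggLHS`.
def mixingCoeff (t : ℕ) : ℝ := max (f t - suffixMax f n (t + 1)) 0

variable {f n}

lemma suffixMax_nonneg (t : ℕ) : 0 ≤ suffixMax f n t :=
  (le_fold_max 0).2 (Or.inl le_rfl)

lemma suffixMax_self : suffixMax f n n = 0 := by
  rw [suffixMax, Ico_self, fold_empty]

lemma suffixMax_eq_max {t : ℕ} (ht : t < n) :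
    suffixMax f n t = max (f t) (suffixMax f n (t + 1)) := by
  rw [suffixMax, suffixMax, ← insert_Ico_add_one_left_eq_Ico ht, fold_insert (by simp)]

lemma mixingCoeff_nonneg (t : ℕ) : 0 ≤ mixingCoeff f n t := le_max_right _ _

lemma mixingCoeff_eq_sub {t : ℕ} (ht : t < n) :
    mixingCoeff f n t = suffixMax f n t - suffixMax f n (t + 1) := by
  rw [mixingCoeff, suffixMax_eq_max ht, ← max_sub_sub_right, sub_self]

lemma sum_mixingCoeff {t₀ : ℕ} (ht₀ : t₀ ≤ n) :
    ∑ t ∈ Ico t₀ n, mixingCoeff f n t = suffixMax f n t₀ := by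
  have htel := sum_Ico_sub (fun t => -suffixMax f n t) ht₀
  simp only [neg_sub_neg, suffixMax_self, sub_zero] at htel
  rw [sum_congr rfl fun t ht => mixingCoeff_eq_sub (mem_Ico.1 ht).2, htel]

lemma suffixMax_add_min_le_sum {ζ : ℕ → ℝ} {y : ℝ} {p : ℕ}
    (hζ : ∀ t, ζ t = 0 ∨ ζ t = 1) (hfy : ∀ t, ζ t = 0 → f t ≤ y)
    (hp : p < n) (hζp : ζ p = 0) (hone : ∀ t, p < t → t < n → ζ t = 1) :
    suffixMax f n 0 + min (f p) (suffixMax f n (p + 1))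
      ≤ y + ∑ t ∈ range n, mixingCoeff f n t * ζ t := by
  set c := min (f p) (suffixMax f n (p + 1))
  set tail : ℕ → ℝ := fun t₀ => ∑ t ∈ Ico t₀ n, mixingCoeff f n t * ζ t
  have hterm (t : ℕ) : 0 ≤ mixingCoeff f n t * ζ t :=
    mul_nonneg (mixingCoeff_nonneg t) (by rcases hζ t with h | h <;> simp [h])
  have htail : tail (p + 1) = suffixMax f n (p + 1) := by
    rw [← sum_mixingCoeff hp]
    refine sum_congr rfl fun t ht => ?_
    rw [hone t (by simp at ht; omega) (mem_Ico.1 ht).2, mul_one]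
  have hc_le_tail {t₀ : ℕ} (ht₀ : t₀ ≤ p + 1) : c ≤ tail t₀ :=
    calc c ≤ tail (p + 1) := (min_le_right _ _).trans_eq htail.symm
      _ ≤ tail t₀ := sum_le_sum_of_subset_of_nonneg (Ico_subset_Ico_left ht₀)
          fun t _ _ => hterm t
  suffices key : ∀ t₀ ≤ p + 1, suffixMax f n t₀ + c ≤ y + tail t₀ by
    rw [range_eq_Ico]; exact key 0 (Nat.zero_le _)
  intro t₀ ht₀
  induction ht₀ using Nat.decreasingInduction with
  | self => linarith [show c ≤ f p from min_le_left _ _, hfy p hζp]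
  | of_succ t ht ih =>
    have htn : t < n := by omega
    simp only [tail] at ih ⊢
    rw [sum_eq_sum_Ico_succ_bot htn]
    rcases hζ t with h | h
    · -- at a zero of `ζ`, `y` pays for `f t` and the all-ones stretch after `p` pays for `c`
      rw [h, mul_zero, zero_add, suffixMax_eq_max htn, ← max_add_add_right, max_le_iff]
      exact ⟨add_le_add (hfy t h) (hc_le_tail ht), ih⟩
    · rw [h, mul_one, mixingCoeff_eq_sub htn]
      linarith

end SuffixMax

section Sequences

variable {n θ : ℕ}

lemma fold_max_eq_fold_max_val (g : Fin (θ + 1) → ℝ) (s : Finset (Fin (θ + 1))) :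
    s.fold max 0 g = (s.map Fin.valEmbedding).fold max 0 (fun m : ℕ => g m) := by
  rw [fold_map]
  exact fold_congr fun t _ => by simp [Fin.cast_val_eq_self]

lemma laterMax_eq_suffixMax (wj : Fin n → ℝ) (Θ : Fin (θ + 1) → Fin n) (t : Fin (θ + 1)) :
    laterMax wj Θ t = suffixMax (fun m => wj (Θ m)) (θ + 1) (t + 1) := by
  have hfilter : univ.filter (fun s => t < s) = Ioi t := by ext; simp
  rw [laterMax, hfilter, fold_max_eq_fold_max_val, Fin.map_valEmbedding_Ioi,
    ← Ico_add_one_left_eq_Ioo]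
  rfl

lemma thetaMax_eq_suffixMax (wj : Fin n → ℝ) (Θ : Fin (θ + 1) → Fin n) :
    thetaMax wj Θ = suffixMax (fun m => wj (Θ m)) (θ + 1) 0 := by
  rw [thetaMax, fold_max_eq_fold_max_val, Fin.map_valEmbedding_univ, Nat.Iio_eq_range,
    range_eq_Ico]
  rfl

lemma aggLHS_eq {k : ℕ} (w : Fin n → Fin k → ℝ) (ε : ℝ) (Θ : Fin (θ + 1) → Fin n)
    (y : Fin k → ℝ) (z : Fin n → ℝ) :
    aggLHS w ε Θ y z = ∑ j, (y j + ∑ t ∈ range (θ + 1),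
        mixingCoeff (fun m => w (Θ m) j) (θ + 1) t * z (Θ t))
      - min ε (LWT w Θ) * z (Θ θ) := by
  rw [aggLHS, Fin.natCast_eq_last]
  congr 1
  refine sum_congr rfl fun j _ => ?_
  rw [← Fin.sum_univ_eq_sum_range]
  simp only [mixingCoeff, laterMax_eq_suffixMax, Fin.cast_val_eq_self]

lemma LWT_le_sum_min {k : ℕ} (w : Fin n → Fin k → ℝ) (Θ : Fin (θ + 1) → Fin n) {p : ℕ}
    (hp : p < θ) :
    LWT w Θ ≤ ∑ j, min (w (Θ p) j) (suffixMax (fun m => w (Θ m) j) (θ + 1) (p + 1)) := by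
  have hpval : ((p : Fin (θ + 1)) : ℕ) = p := Fin.val_cast_of_lt (by omega)
  refine (inf'_le _ (mem_univ (p : Fin (θ + 1)))).trans_eq ?_
  simp only [hpval, if_pos hp, laterMax_eq_suffixMax]

end Sequences

theorem stmt_7_general (n k θ : ℕ) (w : Fin n → Fin k → ℝ) (ε : ℝ)
    (hw : ∀ i j, 0 ≤ w i j)
    (y : Fin k → ℝ) (z : Fin n → ℝ)
    (hz : ∀ i, z i = 0 ∨ z i = 1)
    (hbigM : ∀ i j, y j + w i j * z i ≥ w i j)
    (hlink : ∑ j, y j ≥ ε)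
    (Θ : Fin (θ + 1) → Fin n) :
    aggLHS w ε Θ y z ≥ ∑ j, thetaMax (fun i => w i j) Θ := by
  set f : Fin k → ℕ → ℝ := fun j m => w (Θ m) j
  set ζ : ℕ → ℝ := fun m => z (Θ m)
  have hfy (j : Fin k) (t : ℕ) (ht : ζ t = 0) : f j t ≤ y j := by
    simpa [ζ, ht] using hbigM (Θ t) j
  rw [aggLHS_eq, ge_iff_le]
  simp only [thetaMax_eq_suffixMax]
  change ∑ j, suffixMax (f j) (θ + 1) 0 ≤
    ∑ j, (y j + ∑ t ∈ range (θ + 1), mixingCoeff (f j) (θ + 1) t * ζ t) - min ε (LWT w Θ) * ζ θ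
  by_cases hall : ∀ t < θ + 1, ζ t = 1
  · have hsum (j : Fin k) :
        ∑ t ∈ range (θ + 1), mixingCoeff (f j) (θ + 1) t * ζ t = suffixMax (f j) (θ + 1) 0 := by
      rw [range_eq_Ico, ← sum_mixingCoeff (Nat.zero_le _)]
      exact sum_congr rfl fun t ht => by rw [hall t (mem_Ico.1 ht).2, mul_one]
    rw [sum_add_distrib, sum_congr rfl fun j _ => hsum j, hall θ (lt_add_one θ), mul_one]
    linarith [min_le_left ε (LWT w Θ)]
  · obtain ⟨p, hp, hζp, hone⟩ := exists_last_zero (ζ := ζ) (fun t => hz _) hall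
    have hbound := sum_le_sum fun j (_ : j ∈ univ) =>
      suffixMax_add_min_le_sum (f := f j) (fun t => hz _) (hfy j) hp hζp hone
    rw [sum_add_distrib] at hbound
    suffices min ε (LWT w Θ) * ζ θ ≤ ∑ j, min (f j p) (suffixMax (f j) (θ + 1) (p + 1)) by
      linarith
    rcases Nat.lt_succ_iff_lt_or_eq.1 hp with hpθ | rfl
    · rw [hone θ hpθ (lt_add_one θ), mul_one]
      exact (min_le_right _ _).trans (LWT_le_sum_min w Θ hpθ)
    · rw [hζp, mul_zero]
      exact sum_nonneg fun j _ => le_min (hw _ _) (suffixMax_nonneg _)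

/-- Validity of the aggregated mixing inequalities for `M(W,0,ε)`: every
`(y,z) ∈ ℝ^k × {0,1}^n` with `y_j + w_{i,j} z_i ≥ w_{i,j}`, `y ≥ 0`, `Σ_j y_j ≥ ε`
satisfies, for every sequence `Θ` in `[n]`, the aggregated mixing inequality. -/
theorem stmt_7 (n k θ : ℕ) (w : Fin n → Fin k → ℝ) (ε : ℝ)
    (hw : ∀ i j, 0 ≤ w i j) (hε : 0 ≤ ε)
    (y : Fin k → ℝ) (z : Fin n → ℝ)
    (hz : ∀ i, z i = 0 ∨ z i = 1)
    (hbigM : ∀ i j, y j + w i j * z i ≥ w i j)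
    (hy : ∀ j, y j ≥ 0)
    (hlink : ∑ j, y j ≥ ε)
    (Θ : Fin (θ + 1) → Fin n) (hΘ : Function.Injective Θ) :
    aggLHS w ε Θ y z ≥ ∑ j, thetaMax (fun i => w i j) Θ :=
  stmt_7_general n k θ w ε hw y z hz hbigM hlink Θ
end

section
/- If the set function g(U) = max{ε, Σ_{j∈[k]} max_{i∈U} w_{i,j}} is submodular on 2^{[n]}, then Ī(ε) := {i ∈ [n] : Σ_{j∈[k]} w_{i,j} ≤ ε} is ε-negligible. -/
/-- `g(U) = max{ε, Σ_{j∈[k]} max_{i∈U} w_{i,j}}`, with the convention that the max over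
the empty set is `0`. -/
def gfun {n k : ℕ} (w : Fin n → Fin k → ℝ) (ε : ℝ) (U : Finset (Fin n)) : ℝ :=
  max ε (∑ j, U.fold max 0 (fun i => w i j))

/-- `Ī(ε) = {i ∈ [n] : Σ_j w_{i,j} ≤ ε}`. -/
noncomputable def Ibar {n k : ℕ} (w : Fin n → Fin k → ℝ) (ε : ℝ) : Finset (Fin n) :=
  Finset.univ.filter (fun i => ∑ j, w i j ≤ ε)

/-- `Ī(ε)` is `ε`-negligible: either `Ī(ε) = ∅`, or both
(C1) `max_{i∈Ī(ε)} w_{i,j} ≤ w_{i',j}` for every `i' ∉ Ī(ε)` and every `j`, and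
(C2) `Σ_j max_{i∈Ī(ε)} w_{i,j} ≤ ε`. -/
def epsNegligible {n k : ℕ} (w : Fin n → Fin k → ℝ) (ε : ℝ) : Prop :=
  Ibar w ε = ∅ ∨
    ((∀ i' ∉ Ibar w ε, ∀ j, (Ibar w ε).fold max 0 (fun i => w i j) ≤ w i' j) ∧
      ∑ j, (Ibar w ε).fold max 0 (fun i => w i j) ≤ ε)

/-!
Once `Ī(ε) ≠ ∅` we have `ε ≥ 0`, hence `g(∅) = ε`, and `g({i}) = ε` for every `i ∈ Ī(ε)`.
Submodularity applied to `T` and a new point `a ∈ Ī(ε)` then gives `g(T ∪ {a}) ≤ g(T)`, so `g`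
stays at `ε` on all of `Ī(ε)`: this is (C2). For `i ∈ Ī(ε)` and `i' ∉ Ī(ε)`, submodularity on
`{i}` and `{i'}` gives `Σ_j max(w_{i,j}, w_{i',j}) ≤ g({i, i'}) ≤ Σ_j w_{i',j}`, which forces
`w_{i,j} ≤ w_{i',j}` for every `j`: this is (C1).
-/

open Finset

theorem apply_le_apply_empty_of_submodular {α β : Type*} [DecidableEq α] [AddCommMonoid β]
    [PartialOrder β] [IsOrderedCancelAddMonoid β] {f : Finset α → β}
    (hf : ∀ A B, f (A ∪ B) + f (A ∩ B) ≤ f A + f B) {S : Finset α}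
    (hS : ∀ a ∈ S, f {a} ≤ f ∅) : f S ≤ f ∅ := by
  induction S using Finset.induction_on with
  | empty => exact le_rfl
  | @insert a T ha ih =>
    have hT : f T ≤ f ∅ := ih fun b hb => hS b (mem_insert_of_mem hb)
    have h := hf T {a}
    rw [union_singleton, inter_singleton_of_notMem ha] at h
    exact le_of_add_le_add_right (h.trans (add_le_add hT (hS a (mem_insert_self a T))))

theorem le_of_sum_max_le_sum {ι M : Type*} [AddCommMonoid M] [LinearOrder M]
    [IsOrderedCancelAddMonoid M] {s : Finset ι} {a b : ι → M}
    (h : ∑ j ∈ s, max (a j) (b j) ≤ ∑ j ∈ s, b j) {j : ι} (hj : j ∈ s) : a j ≤ b j := by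
  have hle : ∀ j ∈ s, b j ≤ max (a j) (b j) := fun j _ => le_max_right _ _
  have heq := (sum_eq_sum_iff_of_le hle).1 (le_antisymm (sum_le_sum hle) h) j hj
  exact heq ▸ le_max_left _ _

section gfun

variable {n k : ℕ} (w : Fin n → Fin k → ℝ) (ε : ℝ)

theorem mem_Ibar {i : Fin n} : i ∈ Ibar w ε ↔ ∑ j, w i j ≤ ε := by
  simp [Ibar]

theorem gfun_empty : gfun w ε ∅ = max ε 0 := by
  simp [gfun]

theorem gfun_singleton (hw : ∀ i j, 0 ≤ w i j) (i : Fin n) :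
    gfun w ε {i} = max ε (∑ j, w i j) := by
  simp [gfun, hw]

theorem gfun_singleton_of_mem_Ibar (hw : ∀ i j, 0 ≤ w i j) {i : Fin n} (hi : i ∈ Ibar w ε) :
    gfun w ε {i} = ε := by
  rw [gfun_singleton w ε hw, max_eq_left ((mem_Ibar w ε).1 hi)]

theorem gfun_singleton_of_notMem_Ibar (hw : ∀ i j, 0 ≤ w i j) {i : Fin n}
    (hi : i ∉ Ibar w ε) : gfun w ε {i} = ∑ j, w i j := by
  rw [gfun_singleton w ε hw, max_eq_right (le_of_not_ge (mt (mem_Ibar w ε).2 hi))]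

theorem sum_max_le_gfun_pair (i i' : Fin n) :
    ∑ j, max (w i j) (w i' j) ≤ gfun w ε {i, i'} := by
  refine (sum_le_sum fun j _ => max_le ?_ ?_).trans (le_max_right _ _)
  · exact (le_fold_max _).2 (Or.inr ⟨i, by simp, le_rfl⟩)
  · exact (le_fold_max _).2 (Or.inr ⟨i', by simp, le_rfl⟩)

variable (hw : ∀ i j, 0 ≤ w i j)
  (hsub : ∀ A B, gfun w ε (A ∪ B) + gfun w ε (A ∩ B) ≤ gfun w ε A + gfun w ε B)
include hw hsub

theorem le_of_mem_Ibar_of_notMem_Ibar {i i' : Fin n} (hi : i ∈ Ibar w ε)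
    (hi' : i' ∉ Ibar w ε) (j : Fin k) : w i j ≤ w i' j := by
  have hne : i ∉ ({i'} : Finset (Fin n)) := by
    rintro hii'
    exact hi' (mem_singleton.1 hii' ▸ hi)
  have h := hsub {i} {i'}
  rw [← insert_eq, singleton_inter_of_notMem hne, gfun_empty,
    gfun_singleton_of_mem_Ibar w ε hw hi, gfun_singleton_of_notMem_Ibar w ε hw hi'] at h
  refine le_of_sum_max_le_sum ?_ (mem_univ j)
  linarith [sum_max_le_gfun_pair w ε i i', le_max_left ε 0]

theorem sum_fold_max_Ibar_le : ∑ j, (Ibar w ε).fold max 0 (fun i => w i j) ≤ max ε 0 := by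
  refine (le_max_right ε _).trans ((apply_le_apply_empty_of_submodular hsub ?_).trans_eq
    (gfun_empty w ε))
  intro a ha
  rw [gfun_singleton_of_mem_Ibar w ε hw ha, gfun_empty]
  exact le_max_left ε 0

end gfun

theorem stmt_10_general (n k : ℕ) (w : Fin n → Fin k → ℝ) (ε : ℝ)
    (hw : ∀ i j, 0 ≤ w i j)
    (hsub : ∀ A B : Finset (Fin n),
      gfun w ε A + gfun w ε B ≥ gfun w ε (A ∪ B) + gfun w ε (A ∩ B)) :
    epsNegligible w ε := by
  rcases (Ibar w ε).eq_empty_or_nonempty with hempty | ⟨a, ha⟩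
  · exact Or.inl hempty
  have hε : 0 ≤ ε := (sum_nonneg fun j _ => hw a j).trans ((mem_Ibar w ε).1 ha)
  refine Or.inr ⟨fun i' hi' j => (fold_max_le _).2 ⟨hw i' j, fun i hi => ?_⟩, ?_⟩
  · exact le_of_mem_Ibar_of_notMem_Ibar w ε hw hsub hi hi' j
  · simpa only [max_eq_left hε] using sum_fold_max_Ibar_le w ε hw hsub

/-- If `g` is submodular, then `Ī(ε)` is `ε`-negligible. -/
theorem stmt_10 (n k : ℕ) (w : Fin n → Fin k → ℝ) (ε : ℝ)
    (hw : ∀ i j, 0 ≤ w i j) (hε : 0 ≤ ε)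
    (hsub : ∀ A B : Finset (Fin n),
      gfun w ε A + gfun w ε B ≥ gfun w ε (A ∪ B) + gfun w ε (A ∩ B)) :
    epsNegligible w ε :=
  stmt_10_general n k w ε hw hsub
end

section
/- If g(U) = max{ε, Σ_{j∈[k]} max_{i∈U} w_{i,j}} is submodular on 2^{[n]}, then ε ≤ L_W(ε), where L_W(ε) := min over distinct pairs p,q ∈ [n]\Ī(ε) of Σ_{j∈[k]} min{w_{p,j}, w_{q,j}} when Ī(ε) ≠ [n], and L_W(ε) := +∞ when Ī(ε) = [n]. -/
/-- If `g` is submodular, then `ε ≤ L_W(ε)`, i.e. `ε ≤ Σ_j min{w_{p,j}, w_{q,j}}` for all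
`p, q ∉ Ī(ε)` (vacuous when `Ī(ε) = [n]`, where `L_W(ε) = +∞`). -/
theorem stmt_11 (n k : ℕ) (w : Fin n → Fin k → ℝ) (ε : ℝ)
    (hw : ∀ i j, 0 ≤ w i j) (hε : 0 ≤ ε)
    (hsub : ∀ A B : Finset (Fin n),
      gfun w ε A + gfun w ε B ≥ gfun w ε (A ∪ B) + gfun w ε (A ∩ B)) :
    ∀ p q : Fin n, p ∉ Ibar w ε → q ∉ Ibar w ε →
      ε ≤ ∑ j, min (w p j) (w q j) := by
  intro p q hp hq
  simp only [Ibar, Finset.mem_filter, Finset.mem_univ, true_and, not_le] at hp hq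
  by_cases hpq : p = q
  · subst hpq; simpa using hp.le
  · have h := hsub {p} {q}
    have hU : ({p} : Finset (Fin n)) ∪ {q} = {p, q} := rfl
    have hI : ({p} : Finset (Fin n)) ∩ {q} = ∅ := by
      simp [Finset.singleton_inter_of_notMem, hpq]
    have e1 : gfun w ε {p} = ∑ j, w p j := by
      have hm : ∀ j, max (w p j) 0 = w p j := fun j => max_eq_left (hw p j)
      simp [gfun, Finset.fold_singleton, hm, max_eq_right hp.le]
    have e2 : gfun w ε {q} = ∑ j, w q j := by
      have hm : ∀ j, max (w q j) 0 = w q j := fun j => max_eq_left (hw q j)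
      simp [gfun, Finset.fold_singleton, hm, max_eq_right hq.le]
    have hne : p ∉ ({q} : Finset (Fin n)) := by simp [hpq]
    have e3 : gfun w ε {p, q} = ∑ j, max (w p j) (w q j) := by
      have hfold : ∀ j, ({p, q} : Finset (Fin n)).fold max 0 (fun i => w i j)
          = max (w p j) (w q j) := by
        intro j
        rw [show ({p, q} : Finset (Fin n)) = insert p {q} from rfl,
          Finset.fold_insert hne, Finset.fold_singleton,
          max_eq_left (hw q j)]
      have hsum : ε ≤ ∑ j, max (w p j) (w q j) :=
        hp.le.trans (Finset.sum_le_sum fun j _ => le_max_left _ _)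
      simp [gfun, hfold, max_eq_right hsum]
    have e4 : gfun w ε (∅ : Finset (Fin n)) = ε := by
      simp [gfun, hε]
    rw [hU, hI, e1, e2, e3, e4] at h
    have key : ∑ j, min (w p j) (w q j) + ∑ j, max (w p j) (w q j)
        = ∑ j, w p j + ∑ j, w q j := by
      rw [← Finset.sum_add_distrib, ← Finset.sum_add_distrib]
      exact Finset.sum_congr rfl fun j _ => min_add_max _ _
    linarith
end

section
/- If Ī(ε) ≠ [n], then L_W(ε) = min over all nonempty sequences Θ of distinct indices contained in [n]\Ī(ε) of L_{W,Θ}. In particular, L_W(ε) ≤ L_{W,Θ} for every nonempty sequence Θ in [n]\Ī(ε), and the minimum is attained by some sequence of length at most 2. -/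
/-- `L_W(ε) = min_{p,q ∉ Ī(ε)} Σ_j min{w_{p,j}, w_{q,j}}` (pairs with `p = q` allowed). -/
noncomputable def LWval {n k : ℕ} (w : Fin n → Fin k → ℝ) (ε : ℝ) : ℝ :=
  sInf {x : ℝ | ∃ p q : Fin n, p ∉ Ibar w ε ∧ q ∉ Ibar w ε ∧
    x = ∑ j, min (w p j) (w q j)}

/-- If `Ī(ε) ≠ [n]`, then `L_W(ε)` equals the minimum of `L_{W,Θ}` over all nonempty
sequences `Θ` of distinct indices in `[n] \ Ī(ε)`: it is a lower bound on every such
`L_{W,Θ}`, and it is attained by a sequence of length at most 2. -/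
theorem stmt_14 (n k : ℕ) (w : Fin n → Fin k → ℝ) (ε : ℝ)
    (hw : ∀ i j, 0 ≤ w i j) (hε : 0 ≤ ε)
    (hne : Ibar w ε ≠ Finset.univ) :
    (∀ (θ : ℕ) (Θ : Fin (θ + 1) → Fin n), Function.Injective Θ →
        (∀ t, Θ t ∉ Ibar w ε) → LWval w ε ≤ LWT w Θ) ∧
    (∃ θ ≤ 1, ∃ Θ : Fin (θ + 1) → Fin n, Function.Injective Θ ∧
        (∀ t, Θ t ∉ Ibar w ε) ∧ LWT w Θ = LWval w ε) := by
  classical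
  obtain ⟨p₀, hp₀⟩ : ∃ p, p ∉ Ibar w ε := by
    by_contra h; push_neg at h
    exact hne (Finset.eq_univ_iff_forall.mpr h)
  set S : Set ℝ := {x : ℝ | ∃ p q : Fin n, p ∉ Ibar w ε ∧ q ∉ Ibar w ε ∧
    x = ∑ j, min (w p j) (w q j)} with hS
  have hS_ne : S.Nonempty := ⟨_, p₀, p₀, hp₀, hp₀, rfl⟩
  have hS_bdd : BddBelow S := by
    refine ⟨0, ?_⟩
    rintro x ⟨p, q, _, _, rfl⟩
    exact Finset.sum_nonneg fun j _ => le_min (hw p j) (hw q j)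
  have hLW : LWval w ε = sInf S := rfl
  have hA : ∀ p q : Fin n, p ∉ Ibar w ε → q ∉ Ibar w ε →
      LWval w ε ≤ ∑ j, min (w p j) (w q j) := fun p q hp hq =>
    csInf_le hS_bdd ⟨p, q, hp, hq, rfl⟩
  have part1 : ∀ (θ : ℕ) (Θ : Fin (θ + 1) → Fin n), Function.Injective Θ →
      (∀ t, Θ t ∉ Ibar w ε) → LWval w ε ≤ LWT w Θ := by
    intro θ Θ _ hΘ
    rw [LWT, Finset.le_inf'_iff]
    intro t _
    by_cases ht : (t : ℕ) < θ
    · simp only [ht, if_true]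
      have hts : t < (⟨t + 1, by omega⟩ : Fin (θ + 1)) := by
        simp [Fin.lt_def]
      set s : Fin (θ + 1) := ⟨t + 1, by omega⟩
      refine le_trans (hA (Θ t) (Θ s) (hΘ t) (hΘ s)) ?_
      refine Finset.sum_le_sum fun j _ => min_le_min le_rfl ?_
      rw [laterMax, Finset.le_fold_max]
      exact Or.inr ⟨s, by simpa using hts, le_rfl⟩
    · simp only [ht, if_false]
      have := hA (Θ t) (Θ t) (hΘ t) (hΘ t)
      simpa [min_self] using this
  refine ⟨part1, ?_⟩
  -- find the minimizing pair
  set T : Finset (Fin n × Fin n) :=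
    Finset.univ.filter (fun pq => pq.1 ∉ Ibar w ε ∧ pq.2 ∉ Ibar w ε) with hT
  have hT_ne : T.Nonempty := ⟨(p₀, p₀), by simp [hT, hp₀]⟩
  obtain ⟨pq, hpqT, hpq_eq⟩ := T.exists_mem_eq_inf' hT_ne
    (fun pq => ∑ j, min (w pq.1 j) (w pq.2 j))
  have hpq1 : pq.1 ∉ Ibar w ε := ((Finset.mem_filter.mp hpqT).2).1
  have hpq2 : pq.2 ∉ Ibar w ε := ((Finset.mem_filter.mp hpqT).2).2
  have hmin : LWval w ε = ∑ j, min (w pq.1 j) (w pq.2 j) := by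
    refine le_antisymm (hA _ _ hpq1 hpq2) ?_
    rw [hLW]
    refine le_csInf hS_ne ?_
    rintro x ⟨p, q, hp, hq, rfl⟩
    rw [← hpq_eq]
    have hmem : (p, q) ∈ T := by
      rw [hT]; exact Finset.mem_filter.mpr ⟨Finset.mem_univ _, hp, hq⟩
    exact Finset.inf'_le _ hmem
  by_cases hcase : pq.1 = pq.2
  · refine ⟨0, by norm_num, fun _ => pq.1, fun a b _ => Fin.ext (by omega),
      fun _ => hpq1, ?_⟩
    have hle : LWT w (fun _ : Fin 1 => pq.1) ≤ ∑ j, w pq.1 j := by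
      have := Finset.inf'_le (b := (0 : Fin 1))
        (fun t : Fin 1 =>
          if (t : ℕ) < 0 then ∑ j, min (w pq.1 j) (laterMax (fun i => w i j) (fun _ => pq.1) t)
          else ∑ j, w pq.1 j) (Finset.mem_univ 0)
      simpa [LWT] using this
    have hval : LWval w ε = ∑ j, w pq.1 j := by
      rw [hmin, ← hcase]; simp [min_self]
    exact le_antisymm (hval ▸ hle)
      (part1 0 _ (fun a b _ => Fin.ext (by omega)) (fun _ => hpq1))
  · refine ⟨1, le_rfl, ![pq.1, pq.2], ?_, ?_, ?_⟩
    · intro a b hab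
      fin_cases a <;> fin_cases b <;>
        simp only [Matrix.cons_val_zero, Matrix.cons_val_one, Matrix.head_cons] at hab <;>
        first | rfl | exact absurd hab hcase | exact absurd hab.symm hcase
    · intro t
      fin_cases t
      · exact hpq1
      · exact hpq2
    · have hlm : ∀ j, laterMax (fun i => w i j) ![pq.1, pq.2] 0 = w pq.2 j := by
        intro j
        rw [laterMax]
        have hfil : (Finset.univ.filter (fun s : Fin 2 => (0 : Fin 2) < s)) = {1} := by
          decide
        rw [hfil, Finset.fold_singleton]
        simpa using max_eq_left (hw pq.2 j)
      have hle : LWT w ![pq.1, pq.2] ≤ ∑ j, min (w pq.1 j) (w pq.2 j) := by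
        have := Finset.inf'_le (b := (0 : Fin 2))
          (fun t : Fin 2 =>
            if (t : ℕ) < 1 then
              ∑ j, min (w (![pq.1, pq.2] t) j) (laterMax (fun i => w i j) ![pq.1, pq.2] t)
            else ∑ j, w (![pq.1, pq.2] t) j) (Finset.mem_univ 0)
        rw [LWT]
        refine le_trans this ?_
        simp only [show ((0 : Fin 2) : ℕ) < 1 from by norm_num, if_true]
        refine le_of_eq (Finset.sum_congr rfl fun j _ => ?_)
        rw [hlm j, Matrix.cons_val_zero]
      refine le_antisymm (hmin ▸ hle) ?_
      refine part1 1 _ ?_ ?_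
      · intro a b hab
        fin_cases a <;> fin_cases b <;>
          simp only [Matrix.cons_val_zero, Matrix.cons_val_one, Matrix.head_cons] at hab <;>
          first | rfl | exact absurd hab hcase | exact absurd hab.symm hcase
      · intro t
        fin_cases t
        · exact hpq1
        · exact hpq2
end

section
/- Let f : {0,1}^n → ℝ be submodular with f(∅) = 0, and let σ be a permutation of [n]. Define π ∈ ℝ^n by π_{σ(t)} = f(V_t) − f(V_{t−1}) where V_t = {σ(1),…,σ(t)} and V_0 = ∅. Then π belongs to the extended polymatroid EP_f, i.e., Σ_{i∈V} π_i ≤ f(V) for every V ⊆ [n]. -/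
/-- `V_t = {σ(1), …, σ(t)}` (0-indexed: the image under `σ` of the first `t` positions). -/
def greedyV {n : ℕ} (σ : Equiv.Perm (Fin n)) (t : ℕ) : Finset (Fin n) :=
  (Finset.univ.filter (fun s : Fin n => (s : ℕ) < t)).image σ

/-- The greedy vector: `π_{σ(t)} = f(V_t) − f(V_{t−1})`. -/
def greedyPi {n : ℕ} (f : Finset (Fin n) → ℝ) (σ : Equiv.Perm (Fin n)) (i : Fin n) : ℝ :=
  f (greedyV σ ((σ.symm i : ℕ) + 1)) - f (greedyV σ (σ.symm i))

/-- For a submodular `f` with `f(∅) = 0` and a permutation `σ`, the greedy vector `π`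
belongs to the extended polymatroid `EP_f`: `Σ_{i∈V} π_i ≤ f(V)` for all `V ⊆ [n]`. -/
theorem stmt_18 (n : ℕ) (f : Finset (Fin n) → ℝ)
    (hsub : ∀ A B : Finset (Fin n), f A + f B ≥ f (A ∪ B) + f (A ∩ B))
    (hf0 : f ∅ = 0) (σ : Equiv.Perm (Fin n)) :
    ∀ V : Finset (Fin n), ∑ i ∈ V, greedyPi f σ i ≤ f V := by
  intro V
  induction V using Finset.strongInductionOn with
  | _ V ih =>
    rcases V.eq_empty_or_nonempty with rfl | hne
    · simp [hf0]
    · set k : Fin n := (V.image σ.symm).max' (hne.image _) with hkdef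
      have hkmem : k ∈ V.image σ.symm := (V.image σ.symm).max'_mem _
      obtain ⟨j, hjV, hjk⟩ := Finset.mem_image.mp hkmem
      have hsj : σ.symm j = k := hjk
      have hmax : ∀ i ∈ V, σ.symm i ≤ k := fun i hi =>
        (V.image σ.symm).le_max' _ (Finset.mem_image_of_mem _ hi)
      -- V.erase j ⊆ greedyV σ k
      have herase_sub : V.erase j ⊆ greedyV σ (k : ℕ) := by
        intro i hi
        have hiV := Finset.mem_of_mem_erase hi
        have hij : i ≠ j := Finset.ne_of_mem_erase hi
        have hlt : σ.symm i < k := by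
          refine lt_of_le_of_ne (hmax i hiV) ?_
          intro h
          exact hij (by simpa [hsj] using σ.symm.injective (h.trans hsj.symm))
        refine Finset.mem_image.mpr ⟨σ.symm i, ?_, by simp⟩
        simp only [Finset.mem_filter, Finset.mem_univ, true_and]; exact hlt
      -- union
      have hV_sub : V ⊆ greedyV σ ((k : ℕ) + 1) := by
        intro i hi
        refine Finset.mem_image.mpr ⟨σ.symm i, ?_, by simp⟩
        have := hmax i hi
        simp only [Finset.mem_filter, Finset.mem_univ, true_and, Nat.lt_succ_iff]; exact this
      have hmono : greedyV σ (k : ℕ) ⊆ greedyV σ ((k : ℕ) + 1) := by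
        apply Finset.image_subset_image
        intro s hs
        simp only [Finset.mem_filter] at hs ⊢
        exact ⟨hs.1, hs.2.trans (Nat.lt_succ_self _)⟩
      have hunion : greedyV σ (k : ℕ) ∪ V = greedyV σ ((k : ℕ) + 1) := by
        apply Finset.Subset.antisymm (Finset.union_subset hmono hV_sub)
        intro x hx
        obtain ⟨s, hs, rfl⟩ := Finset.mem_image.mp hx
        simp only [Finset.mem_filter, Finset.mem_univ, true_and, Nat.lt_succ_iff] at hs
        rcases lt_or_eq_of_le hs with h | h
        · exact Finset.mem_union_left _ (Finset.mem_image.mpr ⟨s, by simp only [Finset.mem_filter, Finset.mem_univ, true_and]; exact h, rfl⟩)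
        · have : s = k := Fin.ext h
          subst this
          exact Finset.mem_union_right _ (by rw [← hsj]; simpa using hjV)
      have hjnot : j ∉ greedyV σ (k : ℕ) := by
        intro h
        obtain ⟨s, hs, hsj'⟩ := Finset.mem_image.mp h
        simp only [Finset.mem_filter, Finset.mem_univ, true_and] at hs
        have : s = σ.symm j := by simpa using congrArg σ.symm hsj'
        rw [this, hsj] at hs
        exact lt_irrefl _ hs
      have hinter : greedyV σ (k : ℕ) ∩ V = V.erase j := by
        apply Finset.Subset.antisymm
        · intro x hx
          simp only [Finset.mem_inter] at hx
          refine Finset.mem_erase.mpr ⟨?_, hx.2⟩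
          rintro rfl; exact hjnot hx.1
        · exact Finset.subset_inter herase_sub (Finset.erase_subset _ _)
      have hsplit : ∑ i ∈ V, greedyPi f σ i
          = greedyPi f σ j + ∑ i ∈ V.erase j, greedyPi f σ i :=
        (Finset.add_sum_erase V _ hjV).symm
      have hIH := ih (V.erase j) (Finset.erase_ssubset hjV)
      have hpi : greedyPi f σ j = f (greedyV σ ((k : ℕ) + 1)) - f (greedyV σ (k : ℕ)) := by
        simp [greedyPi, hsj]
      have hsm := hsub (greedyV σ (k : ℕ)) V
      rw [hunion, hinter] at hsm
      rw [hsplit, hpi]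
      linarith
end
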